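/- arXiv:1905.11811 — 2 statements merged into one kernel-verified Lean document; each statement's English description precedes it below -/
import Mathlib

section
/- (Theorem 1, sign part, graph form.) Assume k_f > 0 and that τ : ℝ → ℝ is continuous and 2π-periodic, with U(q) = −∫₀^q τ(s) ds. If z : [0, 2π] → ℝ is continuously differentiable, satisfies I·z(s)·z'(s) = −k_f·z(s) + τ(s) for all s, z(0) = z(2π), and z(s) ≠ 0 for all s ∈ [0, 2π], then U(2π) ≠ 0 and z(s)·U(2π) < 0 for all s ∈ [0, 2π]; that is, the limit cycle is sign definite with sign opposite to the sign of U(2π). -/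
/-!
Integrating `I z z' = -k_f z + τ` over one period, the term `I z z' = (I z²/2)'` contributes
nothing because the orbit closes up, so `U(2π) = -∫₀^{2π} τ = -k_f ∫₀^{2π} z`. A continuous
`z` without zeros has constant sign, which its integral shares; hence `z(s) U(2π) < 0`.
-/

/-- The potential `U(q) = -∫₀^q τ(s) ds`. -/
noncomputable def potentialU (τ : ℝ → ℝ) (q : ℝ) : ℝ := -∫ s in (0:ℝ)..q, τ s

open Set intervalIntegral
open MeasureTheory (volume)

theorem integral_mul_deriv_self_eq_zero_of_eq {z z' : ℝ → ℝ} {a b : ℝ}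
    (hz : ∀ x ∈ uIcc a b, HasDerivAt z (z' x) x) (hz' : IntervalIntegrable z' volume a b)
    (hab : z a = z b) : ∫ x in a..b, z x * z' x = 0 := by
  have hsq := integral_deriv_mul_eq_sub hz hz hz' hz'
  have hdouble : (fun x => z' x * z x + z x * z' x) = fun x => 2 * (z x * z' x) := by
    funext x; ring
  rw [hdouble, integral_const_mul, hab, sub_self] at hsq
  simpa using hsq

theorem integral_eq_mul_integral_of_mul_deriv_eq {I kf : ℝ} {τ z z' : ℝ → ℝ} {a b : ℝ}
    (hz : ∀ x ∈ uIcc a b, HasDerivAt z (z' x) x) (hz' : IntervalIntegrable z' volume a b)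
    (hode : ∀ x ∈ uIcc a b, I * z x * z' x = -kf * z x + τ x) (hab : z a = z b) :
    ∫ x in a..b, τ x = kf * ∫ x in a..b, z x := by
  have hzc : ContinuousOn z (uIcc a b) := fun x hx => (hz x hx).continuousAt.continuousWithinAt
  have hzz' : IntervalIntegrable (fun x => z x * z' x) volume a b := hz'.continuousOn_mul hzc
  calc ∫ x in a..b, τ x = ∫ x in a..b, I * (z x * z' x) + kf * z x :=
        integral_congr fun x hx => by linarith [hode x hx]
    _ = I * (∫ x in a..b, z x * z' x) + kf * ∫ x in a..b, z x := by
        rw [integral_add (hzz'.const_mul I) (hzc.intervalIntegrable.const_mul kf),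
          integral_const_mul, integral_const_mul]
    _ = kf * ∫ x in a..b, z x := by
        rw [integral_mul_deriv_self_eq_zero_of_eq hz hz' hab, mul_zero, zero_add]

theorem mul_integral_pos_of_ne_zero {z : ℝ → ℝ} {a b : ℝ} (hab : a < b)
    (hz : ContinuousOn z (Icc a b)) (hnz : ∀ x ∈ Icc a b, z x ≠ 0) :
    ∀ x ∈ Icc a b, 0 < z x * ∫ y in a..b, z y := by
  have hint : IntervalIntegrable z volume a b :=
    hz.intervalIntegrable_of_Icc hab.le
  rcases isPreconnected_Icc.mapsTo_Ioi_or_Iio hz hnz with hpos | hneg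
  · have : 0 < ∫ y in a..b, z y :=
      intervalIntegral_pos_of_pos_on hint (fun y hy => hpos (Ioo_subset_Icc_self hy)) hab
    exact fun x hx => mul_pos (hpos hx) this
  · have : 0 < ∫ y in a..b, -z y :=
      intervalIntegral_pos_of_pos_on hint.neg
        (fun y hy => neg_pos.mpr (hneg (Ioo_subset_Icc_self hy))) hab
    rw [integral_neg, neg_pos] at this
    exact fun x hx => mul_pos_of_neg_of_neg (hneg hx) this

theorem limit_cycle_sign_definite_general
    (I kf : ℝ) (hkf : 0 < kf)
    (τ : ℝ → ℝ)
    (z z' : ℝ → ℝ)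
    (hz : ∀ s ∈ Set.Icc (0:ℝ) (2 * Real.pi), HasDerivAt z (z' s) s)
    (hz' : ContinuousOn z' (Set.Icc (0:ℝ) (2 * Real.pi)))
    (hode : ∀ s ∈ Set.Icc (0:ℝ) (2 * Real.pi), I * z s * z' s = -kf * z s + τ s)
    (hclose : z 0 = z (2 * Real.pi))
    (hnz : ∀ s ∈ Set.Icc (0:ℝ) (2 * Real.pi), z s ≠ 0) :
    potentialU τ (2 * Real.pi) ≠ 0 ∧
      ∀ s ∈ Set.Icc (0:ℝ) (2 * Real.pi), z s * potentialU τ (2 * Real.pi) < 0 := by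
  have hπ : (0:ℝ) < 2 * Real.pi := by positivity
  have huIcc : uIcc (0:ℝ) (2 * Real.pi) = Icc 0 (2 * Real.pi) := uIcc_of_le hπ.le
  have hU : potentialU τ (2 * Real.pi) = -(kf * ∫ s in (0:ℝ)..(2 * Real.pi), z s) := by
    rw [potentialU, integral_eq_mul_integral_of_mul_deriv_eq (huIcc ▸ hz)
      (hz'.intervalIntegrable_of_Icc hπ.le) (huIcc ▸ hode) hclose]
  have hsign : ∀ s ∈ Icc (0:ℝ) (2 * Real.pi), z s * potentialU τ (2 * Real.pi) < 0 := by
    intro s hs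
    have hpos := mul_integral_pos_of_ne_zero hπ
      (fun x hx => (hz x hx).continuousAt.continuousWithinAt) hnz s hs
    rw [hU, mul_neg, mul_left_comm, neg_neg_iff_pos]
    exact mul_pos hkf hpos
  refine ⟨fun hU0 => ?_, hsign⟩
  simpa [hU0] using hsign 0 ⟨le_rfl, hπ.le⟩

/-- **Theorem 1, sign part, graph form.**
Assume `k_f > 0` and `τ` continuous and 2π-periodic, with `U(q) = −∫₀^q τ(s) ds`.
If `z : [0, 2π] → ℝ` is continuously differentiable, satisfies
`I·z(s)·z'(s) = −k_f·z(s) + τ(s)` for all `s`, `z(0) = z(2π)`, and `z(s) ≠ 0` on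
`[0, 2π]`, then `U(2π) ≠ 0` and `z(s)·U(2π) < 0` on `[0, 2π]`: the limit cycle is
sign definite with sign opposite to that of `U(2π)`. -/
theorem limit_cycle_sign_definite
    (I kf : ℝ) (hI : 0 < I) (hkf : 0 < kf)
    (τ : ℝ → ℝ) (hτ : Continuous τ) (hper : Function.Periodic τ (2 * Real.pi))
    (z z' : ℝ → ℝ)
    (hz : ∀ s ∈ Set.Icc (0:ℝ) (2 * Real.pi), HasDerivAt z (z' s) s)
    (hz' : ContinuousOn z' (Set.Icc (0:ℝ) (2 * Real.pi)))
    (hode : ∀ s ∈ Set.Icc (0:ℝ) (2 * Real.pi), I * z s * z' s = -kf * z s + τ s)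
    (hclose : z 0 = z (2 * Real.pi))
    (hnz : ∀ s ∈ Set.Icc (0:ℝ) (2 * Real.pi), z s ≠ 0) :
    potentialU τ (2 * Real.pi) ≠ 0 ∧
      ∀ s ∈ Set.Icc (0:ℝ) (2 * Real.pi), z s * potentialU τ (2 * Real.pi) < 0 :=
  limit_cycle_sign_definite_general I kf hkf τ z z' hz hz' hode hclose hnz
end

section
/- (Energy balance on a rotational periodic solution.) Assume k_f > 0 and that τ : ℝ → ℝ is continuous and 2π-periodic, with U(q) = −∫₀^q τ(s) ds. Let m be a nonzero integer and suppose q : ℝ → ℝ is twice differentiable, satisfies I·q''(t) = −k_f·q'(t) + τ(q(t)) for all t, and q(t + T) = q(t) + 2π·m for all t, for some T > 0. Then k_f·∫₀^T (q'(t))² dt = −m·U(2π); in particular m·U(2π) < 0, so a rotational periodic solution advancing by +2π per period can exist only if U(2π) < 0, and one retreating by −2π per period only if U(2π) > 0. -/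
open Set

noncomputable def mechanicalEnergy (I : ℝ) (τ q q' : ℝ → ℝ) (t : ℝ) : ℝ :=
  I / 2 * q' t ^ 2 + potentialU τ (q t)

theorem hasDerivAt_potentialU {τ : ℝ → ℝ} (hτ : Continuous τ) (x : ℝ) :
    HasDerivAt (potentialU τ) (-τ x) x :=
  (hτ.integral_hasStrictDerivAt 0 x).hasDerivAt.neg

theorem potentialU_add_int_mul {τ : ℝ → ℝ} {c : ℝ} (hτ : Continuous τ)
    (hper : Function.Periodic τ c) (m : ℤ) (x : ℝ) :
    potentialU τ (x + m * c) = potentialU τ x + m * potentialU τ c := by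
  have hshift : ∫ s in x..x + m * c, τ s = m * ∫ s in (0 : ℝ)..c, τ s := by
    simpa [zsmul_eq_mul] using
      (hper.intervalIntegral_add_zsmul_eq m x fun t₁ t₂ => hτ.intervalIntegrable t₁ t₂).trans
        (congrArg (m • ·) (hper.intervalIntegral_add_eq x 0))
  have hsplit := intervalIntegral.integral_interval_sub_left
    (hτ.intervalIntegrable (μ := MeasureTheory.volume) 0 (x + m * c)) (hτ.intervalIntegrable 0 x)
  simp only [potentialU]
  linarith

theorem periodic_of_hasDerivAt_of_add_const {q q' : ℝ → ℝ} {T c : ℝ}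
    (hq : ∀ t, HasDerivAt q (q' t) t) (hwind : ∀ t, q (t + T) = q t + c) :
    Function.Periodic q' T := by
  intro t
  have hshifted : HasDerivAt (fun s => q (s + T)) (q' (t + T)) t :=
    (hq (t + T)).comp_add_const t T
  rw [funext hwind] at hshifted
  exact hshifted.unique ((hq t).add_const c)

section Dissipation

variable {I kf : ℝ} {τ q q' q'' : ℝ → ℝ}

theorem hasDerivAt_mechanicalEnergy (hτ : Continuous τ) {t : ℝ}
    (hq : HasDerivAt q (q' t) t) (hq' : HasDerivAt q' (q'' t) t)
    (hode : I * q'' t = -kf * q' t + τ (q t)) :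
    HasDerivAt (mechanicalEnergy I τ q q') (-kf * q' t ^ 2) t := by
  have hE := ((hq'.pow 2).const_mul (I / 2)).add ((hasDerivAt_potentialU hτ (q t)).comp t hq)
  refine hE.congr_deriv ?_
  linear_combination q' t * hode

theorem mechanicalEnergy_sub_eq_integral (hτ : Continuous τ)
    (hq : ∀ t, HasDerivAt q (q' t) t) (hq' : ∀ t, HasDerivAt q' (q'' t) t)
    (hode : ∀ t, I * q'' t = -kf * q' t + τ (q t)) (a b : ℝ) :
    mechanicalEnergy I τ q q' a - mechanicalEnergy I τ q q' b = kf * ∫ t in a..b, q' t ^ 2 := by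
  have hq'c : Continuous q' := continuous_iff_continuousAt.2 fun t => (hq' t).continuousAt
  have hFTC := intervalIntegral.integral_eq_sub_of_hasDerivAt
    (fun t _ => hasDerivAt_mechanicalEnergy hτ (hq t) (hq' t) (hode t))
    (((hq'c.pow 2).const_mul (-kf)).intervalIntegrable a b)
  rw [intervalIntegral.integral_const_mul] at hFTC
  linarith

end Dissipation

theorem integral_sq_deriv_pos_of_ne {q q' : ℝ → ℝ} {a b : ℝ} (hab : a < b)
    (hq : ∀ t ∈ Icc a b, HasDerivAt q (q' t) t) (hq'c : ContinuousOn q' (Icc a b))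
    (hne : q a ≠ q b) :
    0 < ∫ t in a..b, q' t ^ 2 := by
  obtain ⟨c, hc, hslope⟩ := exists_hasDerivAt_eq_slope q q' hab
    (fun t ht => (hq t ht).continuousAt.continuousWithinAt)
    (fun t ht => hq t (Ioo_subset_Icc_self ht))
  have hvel_ne : q' c ≠ 0 := by
    rw [hslope]
    exact div_ne_zero (sub_ne_zero.2 hne.symm) (sub_ne_zero.2 hab.ne')
  exact intervalIntegral.integral_pos hab (hq'c.pow 2) (fun _ _ => sq_nonneg _)
    ⟨c, Ioo_subset_Icc_self hc, by positivity⟩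

theorem rotational_energy_balance_general
    (I kf : ℝ) (hkf : 0 < kf)
    (τ : ℝ → ℝ) (hτ : Continuous τ) (hper : Function.Periodic τ (2 * Real.pi))
    (m : ℤ) (hm : m ≠ 0)
    (T : ℝ) (hT : 0 < T)
    (q q' q'' : ℝ → ℝ)
    (hq : ∀ t, HasDerivAt q (q' t) t)
    (hq' : ∀ t, HasDerivAt q' (q'' t) t)
    (hode : ∀ t, I * q'' t = -kf * q' t + τ (q t))
    (hwind : ∀ t, q (t + T) = q t + 2 * Real.pi * (m : ℝ)) :
    kf * ∫ t in (0:ℝ)..T, (q' t) ^ 2 = -(m : ℝ) * potentialU τ (2 * Real.pi) ∧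
      (m : ℝ) * potentialU τ (2 * Real.pi) < 0 := by
  have hqT : q T = q 0 + m * (2 * Real.pi) := by simpa [mul_comm] using hwind 0
  have hq'T : q' T = q' 0 := by
    simpa using periodic_of_hasDerivAt_of_add_const hq hwind 0
  have hbalance : kf * ∫ t in (0:ℝ)..T, q' t ^ 2 = -(m : ℝ) * potentialU τ (2 * Real.pi) := by
    rw [← mechanicalEnergy_sub_eq_integral hτ hq hq' hode, mechanicalEnergy, mechanicalEnergy,
      hq'T, hqT, potentialU_add_int_mul hτ hper]
    ring
  have hadvance : q 0 ≠ q T := by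
    rw [hqT]
    simpa [Real.pi_ne_zero] using hm
  have hpos := integral_sq_deriv_pos_of_ne hT (fun t _ => hq t)
    (continuous_iff_continuousAt.2 fun t => (hq' t).continuousAt).continuousOn hadvance
  exact ⟨hbalance, by linarith [mul_pos hkf hpos]⟩

/-- **energy balance on a rotational periodic solution.**
Assume `k_f > 0` and `τ` continuous and 2π-periodic, with `U(q) = −∫₀^q τ(s) ds`.
Let `m` be a nonzero integer and suppose `q : ℝ → ℝ` is twice differentiable,
satisfies `I·q''(t) = −k_f·q'(t) + τ(q(t))` for all `t`, and
`q(t + T) = q(t) + 2π·m` for all `t`, for some `T > 0`.  Then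
`k_f·∫₀^T (q'(t))² dt = −m·U(2π)`; in particular `m·U(2π) < 0`. -/
theorem rotational_energy_balance
    (I kf : ℝ) (hI : 0 < I) (hkf : 0 < kf)
    (τ : ℝ → ℝ) (hτ : Continuous τ) (hper : Function.Periodic τ (2 * Real.pi))
    (m : ℤ) (hm : m ≠ 0)
    (T : ℝ) (hT : 0 < T)
    (q q' q'' : ℝ → ℝ)
    (hq : ∀ t, HasDerivAt q (q' t) t)
    (hq' : ∀ t, HasDerivAt q' (q'' t) t)
    (hode : ∀ t, I * q'' t = -kf * q' t + τ (q t))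
    (hwind : ∀ t, q (t + T) = q t + 2 * Real.pi * (m : ℝ)) :
    kf * ∫ t in (0:ℝ)..T, (q' t) ^ 2 = -(m : ℝ) * potentialU τ (2 * Real.pi) ∧
      (m : ℝ) * potentialU τ (2 * Real.pi) < 0 :=
  rotational_energy_balance_general I kf hkf τ hτ hper m hm T hT q q' q'' hq hq' hode hwind
end
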